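/- Let m ≥ 1, let p and q be complex polynomials of degree at most m−1, and let θ_1, …, θ_{2m−1} be distinct real numbers with |p(θ_j)| = |q(θ_j)| for j = 1, …, 2m−1. Then |p(x)| = |q(x)| for every real x. -/

import Mathlib

/-! On the real axis `p * map conj p` evaluates to `|p|²`, so `R = p * map conj p - q * map conj q`
is a polynomial of degree at most `2(m - 1)` whose values at real `x` are `|p(x)|² - |q(x)|²`.
Vanishing at `2m - 1` distinct points forces `R = 0`. -/

open Polynomial

namespace Polynomial

theorem eval_ofReal_mul_map_conj (r : ℂ[X]) (x : ℝ) :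
    (r * r.map (starRingEnd ℂ)).eval (x : ℂ) = (‖r.eval (x : ℂ)‖ : ℂ) ^ 2 := by
  rw [eval_mul, eval_map, ← Complex.conj_ofReal, eval₂_at_apply, Complex.conj_ofReal,
    Complex.mul_conj']

theorem natDegree_mul_map_conj_le {r : ℂ[X]} {n : ℕ} (hr : r.natDegree ≤ n) :
    (r * r.map (starRingEnd ℂ)).natDegree ≤ 2 * n :=
  natDegree_mul_le.trans <| by
    have := (natDegree_map_le (f := starRingEnd ℂ) (p := r)).trans hr
    omega

theorem norm_eval_ofReal_eq_of_card_lt {p q : ℂ[X]} {n : ℕ} (hp : p.natDegree ≤ n)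
    (hq : q.natDegree ≤ n) {ι : Type*} [Fintype ι] {θ : ι → ℝ} (hθ : Function.Injective θ)
    (hcard : 2 * n < Fintype.card ι) (h : ∀ i, ‖p.eval (θ i : ℂ)‖ = ‖q.eval (θ i : ℂ)‖)
    (x : ℝ) : ‖p.eval (x : ℂ)‖ = ‖q.eval (x : ℂ)‖ := by
  set R := p * p.map (starRingEnd ℂ) - q * q.map (starRingEnd ℂ)
  have hR : ∀ y : ℝ, R.eval (y : ℂ) = (‖p.eval (y : ℂ)‖ : ℂ) ^ 2 - (‖q.eval (y : ℂ)‖ : ℂ) ^ 2 :=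
    fun y ↦ by rw [eval_sub, eval_ofReal_mul_map_conj, eval_ofReal_mul_map_conj]
  have hR0 : R = 0 := by
    refine eq_zero_of_natDegree_lt_card_of_eval_eq_zero R
      (Complex.ofReal_injective.comp hθ) (fun i ↦ by simp [hR, h i]) ?_
    exact (natDegree_sub_le _ _).trans_lt
      (max_lt ((natDegree_mul_map_conj_le hp).trans_lt hcard)
        ((natDegree_mul_map_conj_le hq).trans_lt hcard))
  have hsq : ‖p.eval (x : ℂ)‖ ^ 2 = ‖q.eval (x : ℂ)‖ ^ 2 := by
    exact_mod_cast sub_eq_zero.mp ((hR x).symm.trans (by rw [hR0, eval_zero]))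
  exact (sq_eq_sq₀ (norm_nonneg _) (norm_nonneg _)).mp hsq

end Polynomial

/-- If two complex polynomials of degree at most m-1 have equal
absolute values at 2m-1 distinct real points, then they have equal absolute
values everywhere on the real axis. -/
theorem stmt_1 (m : ℕ) (hm : 1 ≤ m) (p q : Polynomial ℂ)
    (hp : p.degree ≤ (m - 1 : ℕ)) (hq : q.degree ≤ (m - 1 : ℕ))
    (θ : Fin (2 * m - 1) → ℝ) (hθ : Function.Injective θ)
    (habs : ∀ j, ‖p.eval ((θ j : ℝ) : ℂ)‖ = ‖q.eval ((θ j : ℝ) : ℂ)‖) :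
    ∀ x : ℝ, ‖p.eval (x : ℂ)‖ = ‖q.eval (x : ℂ)‖ :=
  Polynomial.norm_eval_ofReal_eq_of_card_lt (natDegree_le_iff_degree_le.mpr hp)
    (natDegree_le_iff_degree_le.mpr hq) hθ (by rw [Fintype.card_fin]; omega) habs
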